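/- Every stable self-similar necklace in ℝ^d satisfying the open set condition has no cut points. -/

import Mathlib

open Set Topology Metric Bornology

noncomputable section

/-- Euclidean space `ℝ^d`. -/
abbrev Euc (d : ℕ) := EuclideanSpace ℝ (Fin d)

/-- A fractal necklace in `ℝ^d`: the attractor `F` of a necklace IFS `f_1, …, f_n`
(`n ≥ 3`) of contractive homeomorphisms of `ℝ^d`, where cyclically adjacent 1-level
copies meet in a single point (a main node `z k`) and non-adjacent copies are disjoint. -/
structure Necklace (d : ℕ) where
  n : ℕ
  hn : 3 ≤ n
  f : Fin n → (Euc d ≃ₜ Euc d)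
  contr : ∀ k, ∃ c : NNReal, c < 1 ∧ LipschitzWith c (f k)
  F : Set (Euc d)
  Fne : F.Nonempty
  Fcpt : IsCompact F
  Fattr : F = ⋃ k, (f k) '' F
  z : Fin n → Euc d
  hz : ∀ k : Fin n, (f k) '' F ∩ (f (k + ⟨1, by omega⟩)) '' F = {z k}
  hdisj : ∀ m k : Fin n, m ≠ k → m ≠ k + ⟨1, by omega⟩ → k ≠ m + ⟨1, by omega⟩ →
    (f m) '' F ∩ (f k) '' F = ∅

namespace Necklace

variable {d : ℕ}

/-- The digit `1` of `Fin n`. -/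
def one (N : Necklace d) : Fin N.n := ⟨1, by have := N.hn; omega⟩

/-- The homeomorphism `f_σ = f_{i₁} ∘ ⋯ ∘ f_{i_m}` associated to a word `σ = i₁⋯i_m`. -/
def word (N : Necklace d) : List (Fin N.n) → (Euc d ≃ₜ Euc d)
  | [] => Homeomorph.refl _
  | i :: s => (N.word s).trans (N.f i)

/-- The copy `F_σ = f_σ(F)` of the necklace. -/
def copy (N : Necklace d) (σ : List (Fin N.n)) : Set (Euc d) := N.word σ '' N.F

/-- `c_m(x)`: the number of words `σ` of length `m` with `x ∈ F_σ`. -/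
def cnt (N : Necklace d) (m : ℕ) (x : Euc d) : ℕ :=
  Set.ncard {σ : List (Fin N.n) | σ.length = m ∧ x ∈ N.copy σ}

/-- The boundary `∂_F F_k = {z_{k-1}, z_k}` of the 1-level copy `F_k` in `F`. -/
def bdry (N : Necklace d) (k : Fin N.n) : Set (Euc d) := {N.z (k - N.one), N.z k}

/-- A necklace is stable if for each `k` at least two second-level copies `F_{kj}`
meet `∂_F F_k`. -/
def Stable (N : Necklace d) : Prop :=
  ∀ k : Fin N.n,
    2 ≤ Set.ncard {A : Set (Euc d) |
      (∃ j : Fin N.n, A = N.f k '' (N.f j '' N.F)) ∧ (A ∩ N.bdry k).Nonempty}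

/-- A necklace is good if `∂_F F_k` is not contained in any second-level copy `F_{kj}`. -/
def Good (N : Necklace d) : Prop :=
  ∀ k j : Fin N.n, ¬ (N.bdry k ⊆ N.f k '' (N.f j '' N.F))

/-- A necklace is of bounded ramification if `{c_m(z_k)}_m` is bounded for each `k`. -/
def BoundedRamification (N : Necklace d) : Prop :=
  ∀ k : Fin N.n, ∃ C : ℕ, ∀ m : ℕ, N.cnt m (N.z k) ≤ C

/-- `M_F`: the set of points that are main nodes of some copy of `F`. -/
def MF (N : Necklace d) : Set (Euc d) :=
  {x | ∃ (σ : List (Fin N.n)) (k : Fin N.n), x = N.word σ (N.z k)}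

/-- A necklace has no cut points if `F \ {x}` is connected for every `x ∈ F`. -/
def NoCutPoints (N : Necklace d) : Prop :=
  ∀ x ∈ N.F, IsConnected (N.F \ {x})

/-- Property I: each 1-level copy `F_k` has an arc from `z_{k-1}` to `z_k` passing
through at least two main nodes of `F_k`. -/
def PropertyI (N : Necklace d) : Prop :=
  ∀ k : Fin N.n, ∃ γ : Path (N.z (k - N.one)) (N.z k),
    Function.Injective γ ∧ (∀ t, γ t ∈ N.f k '' N.F) ∧
    ∃ p q : Euc d, p ≠ q ∧ (∃ j, p = N.f k (N.z j)) ∧ (∃ j, q = N.f k (N.z j)) ∧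
      p ∈ Set.range γ ∧ q ∈ Set.range γ

/-- A necklace is self-similar if the maps of its NIFS are (contractive) similitudes. -/
def SelfSimilar (N : Necklace d) : Prop :=
  ∀ k : Fin N.n, ∃ c : ℝ, 0 < c ∧ c < 1 ∧ ∀ x y, dist (N.f k x) (N.f k y) = c * dist x y

/-- The open set condition for the NIFS of a necklace. -/
def OSC (N : Necklace d) : Prop :=
  ∃ V : Set (Euc d), V.Nonempty ∧ IsOpen V ∧ IsBounded V ∧
    (∀ k, N.f k '' V ⊆ V) ∧ ∀ j k : Fin N.n, j ≠ k → N.f j '' V ∩ N.f k '' V = ∅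

end Necklace

/-!
Self-similarity and the open set condition give, by a volume-packing argument, a uniform bound
on the number of `m`-level copies `F_σ` containing a point (bounded ramification).

Fix `x ∈ F`. For every copy `F_κ ∋ x`, at most two children of `F_κ` contain `x`, and they are
adjacent, because adjacent main nodes are distinct (for `n = 3` this needs stability and bounded
ramification); hence the children avoiding `x` form a connected chain around the necklace, the
survivors of `F_κ`. Every `y ≠ x` survives in some copy containing `x`, so it
suffices to link the survivors of `F_{κ i}` to those of its parent `F_κ`. If `x` lies in a single
child of `F_{κ i}`, stability gives a surviving grandchild through a boundary node of `F_{κ i}`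
shared with a surviving sibling. Otherwise a boundary node `b ≠ x` of `F_{κ i}` is followed down
to a copy containing `x` in which `b` survives, and the links back up to `F_{κ i}` come from an
induction that terminates because, by bounded ramification, `x` lies in two children of only
finitely many copies.
-/

open Relation

theorem Fin.reflTransGen_of_forall_add_one {n : ℕ} [NeZero n] {r : Fin n → Fin n → Prop}
    {p : Fin n → Prop} {b : Fin n} (h : ∀ a, p a → a ≠ b → p (a + 1) ∧ r a (a + 1))
    {a : Fin n} (ha : p a) : ReflTransGen r a b := by
  suffices ∀ t : ℕ, ∀ a, (b - a).val = t → p a → ReflTransGen r a b from this _ a rfl ha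
  intro t
  induction t with
  | zero =>
    intro a hab _
    rw [Fin.val_eq_zero_iff, sub_eq_zero] at hab
    rw [hab]
  | succ t ih =>
    intro a hab ha
    have hne : a ≠ b := by rintro rfl; simp at hab
    refine .head (h a ha hne).2 (ih _ ?_ (h a ha hne).1)
    rw [← sub_sub, Fin.val_sub_one_of_ne_zero (sub_ne_zero.2 hne.symm), hab, Nat.add_sub_cancel]

theorem Fin.reflTransGen_add_one {n : ℕ} [NeZero n] (a b : Fin n) :
    ReflTransGen (fun i j : Fin n => j = i + 1) a b :=
  Fin.reflTransGen_of_forall_add_one (r := fun i j => j = i + 1) (p := fun _ => True)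
    (fun _ _ _ => ⟨trivial, rfl⟩) trivial

theorem Fin.reflTransGen_compl_of_subset_pair {n : ℕ} [NeZero n] {B : Set (Fin n)} {i : Fin n}
    (hB : ∀ j ∈ B, j = i ∨ j = i + 1) {a b : Fin n} (ha : a ∉ B) (hb : b ∉ B) :
    ReflTransGen (fun j k => j ∉ B ∧ k ∉ B ∧ (k = j + 1 ∨ j = k + 1)) a b := by
  set r := fun j k => j ∉ B ∧ k ∉ B ∧ (k = j + 1 ∨ j = k + 1)
  have hsymm : ∀ {j k}, ReflTransGen r j k → ReflTransGen r k j := by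
    intro j k h
    induction h with
    | refl => rfl
    | tail _ hstep ih => exact .head ⟨hstep.2.1, hstep.1, hstep.2.2.symm⟩ ih
  -- the complement of `B` is a path of the cycle ending at `i - 1`, or at `i` if `i ∉ B`
  obtain ⟨t, ht⟩ : ∃ t, ∀ c ∉ B, c ≠ t → c + 1 ∉ B := by
    by_cases hi : i ∈ B
    · refine ⟨i - 1, fun c hc hct hc1 => ?_⟩
      rcases hB _ hc1 with h | h
      · exact hct (eq_sub_of_add_eq h)
      · exact hc (add_right_cancel h ▸ hi)
    · refine ⟨i, fun c hc hct hc1 => ?_⟩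
      rcases hB _ hc1 with h | h
      · exact hi (h ▸ hc1)
      · exact hct (add_right_cancel h)
  have hto : ∀ c ∉ B, ReflTransGen r c t := fun c hc =>
    Fin.reflTransGen_of_forall_add_one (p := (· ∉ B))
      (fun c hc hct => ⟨ht c hc hct, hc, ht c hc hct, .inl rfl⟩) hc
  exact (hto a ha).trans (hsymm (hto b hb))

theorem Fin.eq_or_eq_add_one_or_eq_add_one_add_one {n : ℕ} [NeZero n] (h : n = 3) (j k : Fin n) :
    k = j ∨ k = j + 1 ∨ k = j + 1 + 1 := by
  subst h; fin_cases j <;> fin_cases k <;> simp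

theorem Fin.eq_add_one_or_eq_add_one_of_ne {n : ℕ} [NeZero n] (h : n = 3) {j k : Fin n}
    (hjk : j ≠ k) : k = j + 1 ∨ j = k + 1 := by
  subst h; fin_cases j <;> fin_cases k <;> simp_all

theorem List.exists_prefix_crossing {α : Type*} {P Q : List α → Prop} {σ : List α}
    (hP : ∀ τ, P τ → ∃ j, P (τ ++ [j])) (hQ : ∃ m, ∀ τ, P τ → m ≤ τ.length → Q τ)
    (hσ : P σ) (hσQ : ¬ Q σ) :
    ∃ τ j, σ <+: τ ∧ P τ ∧ ¬ Q τ ∧ P (τ ++ [j]) ∧ Q (τ ++ [j]) := by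
  obtain ⟨m, hm⟩ := hQ
  suffices ∀ t σ, m ≤ σ.length + t → P σ → ¬ Q σ →
      ∃ τ j, σ <+: τ ∧ P τ ∧ ¬ Q τ ∧ P (τ ++ [j]) ∧ Q (τ ++ [j]) from
    this m σ (Nat.le_add_left _ _) hσ hσQ
  intro t
  induction t with
  | zero => exact fun σ hσm hσ hσQ => absurd (hm σ hσ hσm) hσQ
  | succ t ih =>
    intro σ hσm hσ hσQ
    obtain ⟨j, hj⟩ := hP σ hσ
    by_cases hjQ : Q (σ ++ [j])
    · exact ⟨σ, j, List.prefix_rfl, hσ, hσQ, hj, hjQ⟩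
    obtain ⟨τ, k, hτ, h⟩ := ih (σ ++ [j])
      (by simp only [List.length_append, List.length_singleton]; omega) hj hjQ
    exact ⟨τ, k, (List.prefix_append σ [j]).trans hτ, h⟩

theorem List.ncard_setOf_length_eq (α : Type*) [Fintype α] (m : ℕ) :
    {l : List α | l.length = m}.ncard = Fintype.card α ^ m := by
  rw [← Nat.card_coe_set_eq, ← card_vector, ← Nat.card_eq_fintype_card]
  rfl

theorem pow_length_le_prod_map {α : Type*} {f : α → ℝ} {a : ℝ} (ha : 0 ≤ a) (h : ∀ k, a ≤ f k)
    (l : List α) : a ^ l.length ≤ (l.map f).prod := by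
  induction l with
  | nil => simp
  | cons i l ih =>
    rw [List.map_cons, List.prod_cons, List.length_cons, pow_succ']
    exact mul_le_mul (h i) ih (pow_nonneg ha _) (ha.trans (h i))

theorem prod_map_le_pow_length {α : Type*} {f : α → ℝ} {b : ℝ} (h0 : ∀ k, 0 ≤ f k)
    (h : ∀ k, f k ≤ b) (l : List α) : (l.map f).prod ≤ b ^ l.length := by
  induction l with
  | nil => simp
  | cons i l ih =>
    rw [List.map_cons, List.prod_cons, List.length_cons, pow_succ']
    exact mul_le_mul (h i) ih (List.prod_nonneg (by simpa using fun k _ => h0 k))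
      ((h0 i).trans (h i))

theorem IsCompact.isPreconnected_of_forall_reflTransGen {X : Type*} [MetricSpace X] {s : Set X}
    (hs : IsCompact s)
    (h : ∀ ε > 0, ∀ a ∈ s, ∀ b ∈ s, ReflTransGen (fun u v => v ∈ s ∧ dist u v < ε) a b) :
    IsPreconnected s := by
  rw [isPreconnected_iff_subset_of_fully_disjoint_closed hs.isClosed]
  intro u v hu hv hsuv huv
  by_contra! hnot
  obtain ⟨a, has, hav⟩ := not_subset.1 hnot.2
  obtain ⟨b, hbs, hbu⟩ := not_subset.1 hnot.1
  have hdisj : Disjoint (s ∩ u) (s ∩ v) := huv.mono inter_subset_right inter_subset_right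
  obtain ⟨δ, hδ, hδdisj⟩ := hdisj.exists_thickenings (hs.inter_right hu) (hs.isClosed.inter hv)
  -- a `δ`-chain starting in `u` cannot jump across the gap between `s ∩ u` and `s ∩ v`
  have hstay : ∀ y, ReflTransGen (fun u v => v ∈ s ∧ dist u v < δ) a y → y ∈ s ∩ u := by
    intro y hy
    induction hy with
    | refl => exact ⟨has, (hsuv has).resolve_right hav⟩
    | @tail y y' _ hstep ih =>
      refine ⟨hstep.1, (hsuv hstep.1).resolve_right fun hy'v => disjoint_left.1 hδdisj ?_
        (self_subset_thickening hδ _ ⟨hstep.1, hy'v⟩)⟩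
      exact mem_thickening_iff.2 ⟨y, ih, by rw [dist_comm]; exact hstep.2⟩
  exact hbu (hstay b (h δ hδ a has b hbs)).2

theorem Finset.card_le_of_pairwiseDisjoint_ball {E : Type*} [NormedAddCommGroup E]
    [NormedSpace ℝ E] [FiniteDimensional ℝ E] {ι : Type*} {s : Finset ι} {c : ι → E} {x : E}
    {ρ R : ℝ} (hρ : 0 < ρ) (hR : 0 ≤ R)
    (hdisj : (s : Set ι).PairwiseDisjoint fun i => ball (c i) ρ)
    (hsub : ∀ i ∈ s, ball (c i) ρ ⊆ ball x R) :
    (s.card : ℝ) ≤ (R / ρ) ^ Module.finrank ℝ E := by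
  borelize E
  rcases s.eq_empty_or_nonempty with rfl | ⟨i, hi⟩
  · simp only [Finset.card_empty, Nat.cast_zero]
    positivity
  have hR₀ : 0 < R := dist_nonneg.trans_lt (hsub i hi (mem_ball_self hρ))
  set μ : MeasureTheory.Measure E := MeasureTheory.Measure.addHaar
  set d := Module.finrank ℝ E
  have hB0 : μ (ball 0 1) ≠ 0 := (measure_ball_pos μ 0 one_pos).ne'
  have hBtop : μ (ball 0 1) ≠ ⊤ := MeasureTheory.measure_ball_lt_top.ne
  have hvol : (s.card : ENNReal) * (ENNReal.ofReal (ρ ^ d) * μ (ball 0 1)) ≤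
      ENNReal.ofReal (R ^ d) * μ (ball 0 1) := by
    calc (s.card : ENNReal) * (ENNReal.ofReal (ρ ^ d) * μ (ball 0 1))
        = ∑ i ∈ s, μ (ball (c i) ρ) := by
          simp [MeasureTheory.Measure.addHaar_ball_of_pos μ _ hρ, d]
      _ = μ (⋃ i ∈ s, ball (c i) ρ) :=
          (MeasureTheory.measure_biUnion_finset hdisj fun _ _ => measurableSet_ball).symm
      _ ≤ μ (ball x R) := MeasureTheory.measure_mono (iUnion₂_subset hsub)
      _ = ENNReal.ofReal (R ^ d) * μ (ball 0 1) :=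
          MeasureTheory.Measure.addHaar_ball_of_pos μ _ hR₀
  rw [← mul_assoc, ENNReal.mul_le_mul_iff_left hB0 hBtop, ← ENNReal.ofReal_natCast,
    ← ENNReal.ofReal_mul (by positivity), ENNReal.ofReal_le_ofReal_iff (by positivity)] at hvol
  rwa [div_pow, le_div_iff₀ (by positivity)]

namespace Necklace

variable {d : ℕ} (N : Necklace d)

instance : NeZero N.n := ⟨by have := N.hn; omega⟩

lemma one_eq : N.one = 1 := Fin.ext (Nat.mod_eq_of_lt (by have := N.hn; omega)).symm

lemma one_ne_zero : (1 : Fin N.n) ≠ 0 := by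
  have := N.hn
  rw [Ne, Fin.ext_iff, Fin.val_one', Fin.val_zero, Nat.mod_eq_of_lt (by omega : 1 < N.n)]
  omega

lemma one_add_one_ne_zero : (1 + 1 : Fin N.n) ≠ 0 := by
  have := N.hn
  rw [Ne, Fin.ext_iff, Fin.val_add, Fin.val_one', Fin.val_zero,
    Nat.mod_eq_of_lt (by omega : 1 < N.n), Nat.mod_eq_of_lt (by omega : 1 + 1 < N.n)]
  omega

lemma bdry_eq (k : Fin N.n) : N.bdry k = {N.z (k - 1), N.z k} := by
  rw [bdry, one_eq]

lemma image_inter_image_add_one (k : Fin N.n) :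
    N.f k '' N.F ∩ N.f (k + 1) '' N.F = {N.z k} := by
  rw [← one_eq]
  exact N.hz k

lemma image_inter_image_eq_empty {j k : Fin N.n} (h : j ≠ k) (h₁ : j ≠ k + 1) (h₂ : k ≠ j + 1) :
    N.f j '' N.F ∩ N.f k '' N.F = ∅ := by
  rw [← one_eq] at h₁ h₂
  exact N.hdisj j k h h₁ h₂

lemma z_mem_image (k : Fin N.n) : N.z k ∈ N.f k '' N.F :=
  ((N.image_inter_image_add_one k).superset rfl).1

lemma z_mem_image_add_one (k : Fin N.n) : N.z k ∈ N.f (k + 1) '' N.F :=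
  ((N.image_inter_image_add_one k).superset rfl).2

lemma word_cons_apply (i : Fin N.n) (s : List (Fin N.n)) (x : Euc d) :
    N.word (i :: s) x = N.f i (N.word s x) := rfl

lemma word_append_apply (s t : List (Fin N.n)) (x : Euc d) :
    N.word (s ++ t) x = N.word s (N.word t x) := by
  induction s with
  | nil => rfl
  | cons i s ih => simp only [List.cons_append, word_cons_apply, ih]

lemma image_word_cons (i : Fin N.n) (s : List (Fin N.n)) (A : Set (Euc d)) :
    N.word (i :: s) '' A = N.f i '' (N.word s '' A) := by
  rw [image_image]
  rfl

lemma copy_nil : N.copy [] = N.F := image_id _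

lemma copy_append (s t : List (Fin N.n)) : N.copy (s ++ t) = N.word s '' N.copy t := by
  simp only [copy, image_image, word_append_apply]

lemma copy_cons (i : Fin N.n) (s : List (Fin N.n)) : N.copy (i :: s) = N.f i '' N.copy s :=
  N.image_word_cons i s N.F

lemma copy_singleton (i : Fin N.n) : N.copy [i] = N.f i '' N.F := by
  rw [copy_cons, copy_nil]

lemma image_subset_F (i : Fin N.n) : N.f i '' N.F ⊆ N.F := by
  conv_rhs => rw [N.Fattr]
  exact subset_iUnion (fun k => N.f k '' N.F) i

lemma copy_subset_F (s : List (Fin N.n)) : N.copy s ⊆ N.F := by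
  induction s with
  | nil => rw [copy_nil]
  | cons i s ih => rw [copy_cons]; exact (image_mono ih).trans (N.image_subset_F i)

lemma copy_subset_of_prefix {s t : List (Fin N.n)} (h : s <+: t) : N.copy t ⊆ N.copy s := by
  obtain ⟨u, rfl⟩ := h
  rw [copy_append]
  exact image_mono (N.copy_subset_F u)

lemma copy_eq_iUnion (s : List (Fin N.n)) : N.copy s = ⋃ j, N.copy (s ++ [j]) := by
  conv_lhs => rw [copy, N.Fattr, image_iUnion]
  simp only [copy_append, copy_singleton]

lemma exists_mem_copy_append {x : Euc d} {s : List (Fin N.n)} (h : x ∈ N.copy s) :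
    ∃ j, x ∈ N.copy (s ++ [j]) :=
  mem_iUnion.1 (N.copy_eq_iUnion s ▸ h)

lemma word_z_mem_copy_append (s : List (Fin N.n)) (j : Fin N.n) :
    N.word s (N.z j) ∈ N.copy (s ++ [j]) := by
  rw [copy_append, copy_singleton]
  exact mem_image_of_mem _ (N.z_mem_image j)

lemma word_z_mem_copy_append_add_one (s : List (Fin N.n)) (j : Fin N.n) :
    N.word s (N.z j) ∈ N.copy (s ++ [j + 1]) := by
  rw [copy_append, copy_singleton]
  exact mem_image_of_mem _ (N.z_mem_image_add_one j)

lemma eq_word_z_of_mem {x : Euc d} {s : List (Fin N.n)} {j : Fin N.n}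
    (h : x ∈ N.copy (s ++ [j])) (h₁ : x ∈ N.copy (s ++ [j + 1])) : x = N.word s (N.z j) := by
  simp only [copy_append, copy_singleton] at h h₁
  rw [← mem_singleton_iff, ← image_singleton, ← N.image_inter_image_add_one,
    image_inter (N.word s).injective]
  exact ⟨h, h₁⟩

lemma eq_add_one_or_eq_add_one_of_mem {x : Euc d} {s : List (Fin N.n)} {j k : Fin N.n} (hjk : j ≠ k)
    (hj : x ∈ N.copy (s ++ [j])) (hk : x ∈ N.copy (s ++ [k])) : k = j + 1 ∨ j = k + 1 := by
  by_contra! h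
  simp only [copy_append, copy_singleton] at hj hk
  have : x ∈ N.word s '' (N.f j '' N.F ∩ N.f k '' N.F) := by
    rw [image_inter (N.word s).injective]
    exact ⟨hj, hk⟩
  rw [N.image_inter_image_eq_empty hjk h.2 h.1, image_empty] at this
  exact this

lemma exists_lipschitzWith_lt_one : ∃ L : NNReal, L < 1 ∧ ∀ k, LipschitzWith L (N.f k) := by
  choose c hc1 hc using N.contr
  exact ⟨Finset.univ.sup c, (Finset.sup_lt_iff zero_lt_one).2 fun k _ => hc1 k,
    fun k => (hc k).weaken (Finset.le_sup (Finset.mem_univ k))⟩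

lemma lipschitzWith_word {L : NNReal} (hL : ∀ k, LipschitzWith L (N.f k))
    (s : List (Fin N.n)) : LipschitzWith (L ^ s.length) (N.word s) := by
  induction s with
  | nil => exact LipschitzWith.id.weaken (by simp)
  | cons i s ih => rw [List.length_cons, pow_succ']; exact (hL i).comp ih

lemma exists_forall_length_dist_lt {ε : ℝ} (hε : 0 < ε) :
    ∃ m, ∀ σ : List (Fin N.n), m ≤ σ.length → ∀ a ∈ N.copy σ, ∀ b ∈ N.copy σ, dist a b < ε := by
  obtain ⟨L, hL1, hL⟩ := N.exists_lipschitzWith_lt_one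
  obtain ⟨m, hm⟩ := exists_pow_lt_of_lt_one (by positivity : 0 < ε / (diam N.F + 1))
    (NNReal.coe_lt_one.2 hL1)
  refine ⟨m, fun σ hσ _ ⟨a, ha, hab⟩ _ ⟨b, hb, hbb⟩ => ?_⟩
  subst hab hbb
  calc dist (N.word σ a) (N.word σ b) ≤ (L : ℝ) ^ σ.length * dist a b := by
        simpa using (N.lipschitzWith_word hL σ).dist_le_mul a b
    _ ≤ (L : ℝ) ^ m * (diam N.F + 1) :=
        mul_le_mul (pow_le_pow_of_le_one L.2 (NNReal.coe_le_one.2 hL1.le) hσ)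
          ((dist_le_diam_of_mem N.Fcpt.isBounded ha hb).trans (le_add_of_nonneg_right zero_le_one))
          dist_nonneg (by positivity)
    _ < ε := (lt_div_iff₀ (by positivity)).1 hm

lemma reflTransGen_mem_copy (m : ℕ) {a b : Euc d} (ha : a ∈ N.F) (hb : b ∈ N.F) :
    ReflTransGen (fun u v => ∃ σ : List (Fin N.n), σ.length = m ∧ u ∈ N.copy σ ∧ v ∈ N.copy σ)
      a b := by
  induction m generalizing a b with
  | zero => exact .single ⟨[], rfl, N.copy_nil ▸ ha, N.copy_nil ▸ hb⟩
  | succ m ih =>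
    set r := fun u v => ∃ σ : List (Fin N.n), σ.length = m + 1 ∧ u ∈ N.copy σ ∧ v ∈ N.copy σ
    have hcopy : ∀ j, ∀ a ∈ N.f j '' N.F, ∀ b ∈ N.f j '' N.F, ReflTransGen r a b := by
      rintro j _ ⟨a, ha, rfl⟩ _ ⟨b, hb, rfl⟩
      refine ReflTransGen.lift (N.f j) (fun u v ⟨σ, hσ, hu, hv⟩ => ?_) _ _ (ih ha hb)
      exact ⟨j :: σ, by simp [hσ], N.copy_cons j σ ▸ mem_image_of_mem _ hu,
        N.copy_cons j σ ▸ mem_image_of_mem _ hv⟩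
    -- consecutive first-level copies are joined through the node `z j` they share
    have hcycle : ∀ j k, ∀ a ∈ N.f j '' N.F, ∀ b ∈ N.f k '' N.F, ReflTransGen r a b := by
      intro j k
      induction Fin.reflTransGen_add_one j k with
      | refl => exact hcopy j
      | tail _ hk ih =>
        subst hk
        exact fun a ha b hb => (ih a ha _ (N.z_mem_image _)).trans
          (hcopy _ _ (N.z_mem_image_add_one _) b hb)
    rw [N.Fattr, mem_iUnion] at ha hb
    exact hcycle _ _ a ha.choose_spec b hb.choose_spec

theorem isPreconnected_F : IsPreconnected N.F := by
  refine N.Fcpt.isPreconnected_of_forall_reflTransGen fun ε hε a ha b hb => ?_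
  obtain ⟨m, hm⟩ := N.exists_forall_length_dist_lt hε
  exact ReflTransGen.mono (fun u v ⟨σ, hσ, hu, hv⟩ => ⟨N.copy_subset_F σ hv, hm σ hσ.ge u hu v hv⟩)
    _ _ (N.reflTransGen_mem_copy m ha hb)

lemma isConnected_copy (s : List (Fin N.n)) : IsConnected (N.copy s) :=
  (IsConnected.image ⟨N.Fne, N.isPreconnected_F⟩ _ (N.word s).continuous.continuousOn)

section SelfSimilar

variable {N} {c : Fin N.n → ℝ} (hc : ∀ k a b, dist (N.f k a) (N.f k b) = c k * dist a b)
include hc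

lemma dist_word_apply (σ : List (Fin N.n)) (a b : Euc d) :
    dist (N.word σ a) (N.word σ b) = (σ.map c).prod * dist a b := by
  induction σ with
  | nil => simp [word]
  | cons i σ ih =>
    rw [word_cons_apply, word_cons_apply, hc, ih, List.map_cons, List.prod_cons, mul_assoc]

lemma ball_subset_image_word (hc0 : ∀ k, 0 < c k) (σ : List (Fin N.n)) (a : Euc d) (r : ℝ) :
    ball (N.word σ a) ((σ.map c).prod * r) ⊆ N.word σ '' ball a r := by
  intro y hy
  refine ⟨(N.word σ).symm y, ?_, (N.word σ).apply_symm_apply y⟩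
  have hpos : 0 < (σ.map c).prod := List.prod_pos (by simpa using fun k _ => hc0 k)
  rw [mem_ball, ← mul_lt_mul_iff_right₀ hpos, ← dist_word_apply hc, Homeomorph.apply_symm_apply]
  exact hy

end SelfSimilar

section OpenSet

variable {N} {V : Set (Euc d)} (hV : ∀ k, N.f k '' V ⊆ V)
include hV

lemma image_word_subset (σ : List (Fin N.n)) : N.word σ '' V ⊆ V := by
  induction σ with
  | nil => simp [word]
  | cons i σ ih =>
    rw [image_word_cons]
    exact (image_mono ih).trans (hV i)

lemma disjoint_image_word (hVd : ∀ j k, j ≠ k → N.f j '' V ∩ N.f k '' V = ∅) :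
    ∀ {σ τ : List (Fin N.n)}, ¬ σ <+: τ → ¬ τ <+: σ →
      Disjoint (N.word σ '' V) (N.word τ '' V)
  | [], _, h, _ | _, [], _, h => absurd List.nil_prefix h
  | i :: σ, j :: τ, hστ, hτσ => by
    rw [image_word_cons, image_word_cons]
    by_cases hij : i = j
    · subst hij
      simp only [List.cons_prefix_cons, true_and] at hστ hτσ
      exact (disjoint_image_iff (N.f i).injective).2 (disjoint_image_word hVd hστ hτσ)
    · exact (disjoint_iff_inter_eq_empty.2 (hVd i j hij)).mono
        (image_mono (image_word_subset hV σ)) (image_mono (image_word_subset hV τ))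

end OpenSet

variable {N} in
lemma card_le_of_pairwise_not_prefix {c : Fin N.n → ℝ}
    (hc : ∀ k a b, dist (N.f k a) (N.f k b) = c k * dist a b)
    (hc0 : ∀ k, 0 < c k) {V : Set (Euc d)} (hV : ∀ k, N.f k '' V ⊆ V)
    (hVd : ∀ j k, j ≠ k → N.f j '' V ∩ N.f k '' V = ∅) {v : Euc d} {ρ Δ : ℝ} (hρ : 0 < ρ)
    (hρV : ball v ρ ⊆ V) (hΔ : N.F ⊆ closedBall v Δ) {cmin r : ℝ} (hcmin : 0 < cmin)
    (hcmin1 : cmin ≤ 1) (hr : 0 < r) {x : Euc d} {ι : Type*} {s : Finset ι}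
    {τ : ι → List (Fin N.n)} (hx : ∀ i ∈ s, x ∈ N.copy (τ i))
    (hτ : ∀ i ∈ s, r * cmin ≤ ((τ i).map c).prod ∧ ((τ i).map c).prod ≤ r)
    (hinc : ∀ i ∈ s, ∀ j ∈ s, i ≠ j → ¬ τ i <+: τ j) :
    (s.card : ℝ) ≤ ((Δ + ρ) / (cmin * ρ)) ^ d := by
  have hΔ0 : 0 ≤ Δ := by
    obtain ⟨y, hy⟩ := N.Fne
    exact dist_nonneg.trans (mem_closedBall.1 (hΔ hy))
  have hball : ∀ i ∈ s, ball (N.word (τ i) v) (r * cmin * ρ) ⊆ N.word (τ i) '' V := fun i hi =>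
    (ball_subset_ball (mul_le_mul_of_nonneg_right (hτ i hi).1 hρ.le)).trans
      ((ball_subset_image_word hc hc0 _ _ _).trans (image_mono hρV))
  have key := Finset.card_le_of_pairwiseDisjoint_ball (s := s) (c := fun i => N.word (τ i) v)
    (x := x) (R := r * (Δ + ρ)) (by positivity) (by positivity)
    (fun i hi j hj hij => (disjoint_image_word hV hVd (hinc i hi j hj hij)
      (hinc j hj i hi (Ne.symm hij))).mono (hball i hi) (hball j hj))
    (fun i hi y hy => by
      obtain ⟨x', hx', rfl⟩ := hx i hi
      rw [mem_ball] at hy ⊢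
      calc dist y (N.word (τ i) x')
          ≤ dist y (N.word (τ i) v) + dist (N.word (τ i) v) (N.word (τ i) x') :=
            dist_triangle _ _ _
        _ < r * cmin * ρ + r * Δ := by
          rw [dist_word_apply hc, dist_comm v]
          exact add_lt_add_of_lt_of_le hy
            (mul_le_mul (hτ i hi).2 (mem_closedBall.1 (hΔ hx')) dist_nonneg hr.le)
        _ ≤ r * (Δ + ρ) := by nlinarith [mul_le_mul_of_nonneg_left hcmin1 (mul_pos hr hρ).le])
  rwa [finrank_euclideanSpace_fin, mul_assoc, mul_div_mul_left _ _ hr.ne'] at key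

variable {N} in
lemma exists_prefix_prod_map_mem {c : Fin N.n → ℝ} (hc0 : ∀ k, 0 < c k) {cmin cmax : ℝ}
    (hcmin : ∀ k, cmin ≤ c k) (hcmax : ∀ k, c k ≤ cmax) (hcmax1 : cmax < 1) {x : Euc d}
    {σ : List (Fin N.n)} (hx : x ∈ N.copy σ) {r : ℝ} (hr : 0 < r) (hrσ : r < (σ.map c).prod) :
    ∃ τ, σ <+: τ ∧ x ∈ N.copy τ ∧ r * cmin ≤ (τ.map c).prod ∧ (τ.map c).prod ≤ r := by
  obtain ⟨M, hM⟩ := exists_pow_lt_of_lt_one hr hcmax1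
  have hcmax0 : 0 ≤ cmax := (hc0 0).le.trans (hcmax 0)
  obtain ⟨τ, j, hστ, -, hτr, hτjx, hτjr⟩ := List.exists_prefix_crossing
    (P := (x ∈ N.copy ·)) (Q := fun τ => (τ.map c).prod ≤ r)
    (fun τ h => N.exists_mem_copy_append h)
    ⟨M, fun τ _ hτ => (prod_map_le_pow_length (fun k => (hc0 k).le) hcmax τ).trans
      ((pow_le_pow_of_le_one hcmax0 hcmax1.le hτ).trans hM.le)⟩ hx hrσ.not_ge
  refine ⟨τ ++ [j], hστ.trans (List.prefix_append _ _), hτjx, ?_, hτjr⟩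
  rw [List.map_append, List.prod_append, List.map_singleton, List.prod_singleton]
  exact (mul_le_mul_of_nonneg_left (hcmin j) hr.le).trans
    (mul_le_mul_of_nonneg_right (not_le.1 hτr).le (hc0 j).le)

theorem exists_forall_cnt_le_of_selfSimilar_of_osc (hss : N.SelfSimilar) (hosc : N.OSC) :
    ∃ K : ℕ, ∀ x m, N.cnt m x ≤ K := by
  choose c hc0 hc1 hc using hss
  obtain ⟨V, ⟨v, hv⟩, hVo, -, hV, hVd⟩ := hosc
  obtain ⟨ρ, hρ, hρV⟩ := Metric.isOpen_iff.1 hVo v hv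
  obtain ⟨Δ, hΔ⟩ := N.Fcpt.isBounded.subset_closedBall v
  set cmin := Finset.univ.inf' Finset.univ_nonempty c
  set cmax := Finset.univ.sup' Finset.univ_nonempty c
  have hcmin : ∀ k, cmin ≤ c k := fun k => Finset.inf'_le c (Finset.mem_univ k)
  have hcmax : ∀ k, c k ≤ cmax := fun k => Finset.le_sup' c (Finset.mem_univ k)
  have hcmin0 : 0 < cmin := (Finset.lt_inf'_iff _).2 fun k _ => hc0 k
  have hcmin1 : cmin < 1 := (hcmin 0).trans_lt (hc1 0)
  have hcmax1 : cmax < 1 := (Finset.sup'_lt_iff _).2 fun k _ => hc1 k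
  refine ⟨⌈((Δ + ρ) / (cmin * ρ)) ^ d⌉₊, fun x m => ?_⟩
  set W := {σ : List (Fin N.n) | σ.length = m ∧ x ∈ N.copy σ}
  have hW : W.Finite := (List.finite_length_eq _ m).subset fun σ h => h.1
  -- stop each word of `W` at the scale `r`: the stopped words are pairwise incomparable
  set r := cmin ^ (m + 1)
  have hext : ∀ σ ∈ W, ∃ τ, σ <+: τ ∧ x ∈ N.copy τ ∧
      r * cmin ≤ (τ.map c).prod ∧ (τ.map c).prod ≤ r := by
    rintro σ ⟨rfl, hσ⟩
    refine exists_prefix_prod_map_mem hc0 hcmin hcmax hcmax1 hσ (by positivity) ?_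
    exact (pow_lt_pow_right_of_lt_one₀ hcmin0 hcmin1 (Nat.lt_succ_self _)).trans_le
      (pow_length_le_prod_map hcmin0.le hcmin σ)
  choose! τ hτ using hext
  have hinc : ∀ σ ∈ hW.toFinset, ∀ σ' ∈ hW.toFinset, σ ≠ σ' → ¬ τ σ <+: τ σ' := by
    intro σ hσ σ' hσ' hne h
    rw [hW.mem_toFinset] at hσ hσ'
    have hlen : σ.length = σ'.length := hσ.1.trans hσ'.1.symm
    exact hne ((List.prefix_of_prefix_length_le ((hτ σ hσ).1.trans h) (hτ σ' hσ').1
      hlen.le).eq_of_length hlen)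
  have hcard := card_le_of_pairwise_not_prefix hc hc0 hV hVd hρ hρV hΔ hcmin0 hcmin1.le
    (by positivity) (fun σ hσ => (hτ σ (hW.mem_toFinset.1 hσ)).2.1)
    (fun σ hσ => (hτ σ (hW.mem_toFinset.1 hσ)).2.2) hinc
  rw [cnt, Set.ncard_eq_toFinset_card _ hW]
  exact_mod_cast hcard.trans (Nat.le_ceil _)

def IsSplit (x : Euc d) (κ : List (Fin N.n)) : Prop :=
  ∃ j j', j ≠ j' ∧ x ∈ N.copy (κ ++ [j]) ∧ x ∈ N.copy (κ ++ [j'])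

lemma cnt_le_cnt_succ (m : ℕ) (x : Euc d) : N.cnt m x ≤ N.cnt (m + 1) x := by
  choose! g hg using fun σ (h : σ ∈ {σ : List (Fin N.n) | σ.length = m ∧ x ∈ N.copy σ}) =>
    N.exists_mem_copy_append h.2
  exact Set.ncard_le_ncard_of_injOn (fun σ => σ ++ [g σ])
    (fun σ hσ => ⟨by simp [hσ.1], hg σ hσ⟩) (fun σ _ τ _ h => (List.append_inj' h rfl).1)
    ((List.finite_length_eq _ _).subset fun σ h => h.1)

lemma cnt_lt_cnt_succ {x : Euc d} {κ : List (Fin N.n)} (hκ : N.IsSplit x κ) :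
    N.cnt κ.length x < N.cnt (κ.length + 1) x := by
  obtain ⟨j, j', hjj', hj, hj'⟩ := hκ
  set W := {σ : List (Fin N.n) | σ.length = κ.length ∧ x ∈ N.copy σ}
  choose! g hg using fun σ (h : σ ∈ W) => N.exists_mem_copy_append h.2
  have hsub : (fun σ => σ ++ [g σ]) '' W ⊆ {σ | σ.length = κ.length + 1 ∧ x ∈ N.copy σ} := by
    rintro _ ⟨σ, hσ, rfl⟩
    exact ⟨by simp [hσ.1], hg σ hσ⟩
  -- the extension map picks only one of the two children `κ ++ [j]`, `κ ++ [j']`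
  have hpick : ∀ k, κ ++ [k] ∈ (fun σ => σ ++ [g σ]) '' W → g κ = k := by
    rintro k ⟨σ, -, h⟩
    obtain ⟨rfl, hk⟩ := List.append_inj' h rfl
    exact List.singleton_inj.1 hk
  have hssub : (fun σ => σ ++ [g σ]) '' W ⊂ {σ | σ.length = κ.length + 1 ∧ x ∈ N.copy σ} := by
    refine (Set.ssubset_iff_of_subset hsub).2 ?_
    by_contra! h
    exact hjj' ((hpick j (h _ ⟨by simp, hj⟩)).symm.trans (hpick j' (h _ ⟨by simp, hj'⟩)))
  calc N.cnt κ.length x = ((fun σ => σ ++ [g σ]) '' W).ncard :=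
        (Set.InjOn.ncard_image (f := fun σ => σ ++ [g σ])
          fun σ _ τ _ h => (List.append_inj' h rfl).1).symm
    _ < N.cnt (κ.length + 1) x :=
        Set.ncard_lt_ncard hssub ((List.finite_length_eq _ _).subset fun σ h => h.1)

lemma exists_length_lt_of_isSplit {x : Euc d} {C : ℕ} (hC : ∀ m, N.cnt m x ≤ C) :
    ∃ L, ∀ κ, N.IsSplit x κ → κ.length < L := by
  have hbdd : BddAbove (range (N.cnt · x)) := ⟨C, forall_mem_range.2 hC⟩
  obtain ⟨L, hL⟩ := Nat.sSup_mem (range_nonempty (N.cnt · x)) hbdd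
  refine ⟨L, fun κ hκ => not_le.1 fun hLκ => ?_⟩
  have h₁ := N.cnt_lt_cnt_succ hκ
  have h₂ : N.cnt (κ.length + 1) x ≤ N.cnt L x := by
    rw [show N.cnt L x = _ from hL]
    exact le_csSup hbdd (mem_range_self _)
  have h₃ : N.cnt L x ≤ N.cnt κ.length x :=
    monotone_nat_of_le_succ (fun m => N.cnt_le_cnt_succ m x) hLκ
  omega

lemma cnt_eq_pow_of_forall_mem_copy {x : Euc d} (h : ∀ σ, x ∈ N.copy σ) (m : ℕ) :
    N.cnt m x = N.n ^ m := by
  simp only [cnt, h, and_true, List.ncard_setOf_length_eq, Fintype.card_fin]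

variable {N} in
lemma Stable.exists_ne (hstable : N.Stable) (k : Fin N.n) :
    ∃ a b, a ≠ b ∧ (N.copy [k, a] ∩ N.bdry k).Nonempty ∧ (N.copy [k, b] ∩ N.bdry k).Nonempty := by
  have h := hstable k
  obtain ⟨_, _, ⟨⟨a, rfl⟩, ha⟩, ⟨⟨b, rfl⟩, hb⟩, hab⟩ :=
    (Set.one_lt_ncard_iff (Set.finite_of_ncard_pos (two_pos.trans_le h))).1 (one_lt_two.trans_le h)
  refine ⟨a, b, fun h => hab (h ▸ rfl), ?_, ?_⟩ <;> rwa [copy_cons, copy_singleton]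

lemma one_add_one_add_one_ne_zero (h : 4 ≤ N.n) : (1 + 1 + 1 : Fin N.n) ≠ 0 := by
  rw [Ne, Fin.ext_iff, Fin.val_add, Fin.val_add, Fin.val_one', Fin.val_zero,
    Nat.mod_eq_of_lt (by omega : 1 < N.n), Nat.mod_eq_of_lt (by omega : 1 + 1 < N.n),
    Nat.mod_eq_of_lt (by omega : 1 + 1 + 1 < N.n)]
  omega

lemma eq_z_of_mem_image {p : Euc d} {k : Fin N.n} (h : p ∈ N.f k '' N.F)
    (h₁ : p ∈ N.f (k + 1) '' N.F) : p = N.z k :=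
  (N.image_inter_image_add_one k).subset ⟨h, h₁⟩

/-- For `n = 3` all nodes then coincide, and stability forces every `f k` to fix the common node. -/
lemma mem_copy_of_z_eq_of_three (hstable : N.Stable) (h3 : N.n = 3) {j : Fin N.n}
    (heq : N.z j = N.z (j + 1)) (σ : List (Fin N.n)) : N.z j ∈ N.copy σ := by
  have hq : ∀ k, N.z j ∈ N.f k '' N.F := by
    intro k
    rcases Fin.eq_or_eq_add_one_or_eq_add_one_add_one h3 j k with h | h | h <;> subst k
    · exact N.z_mem_image j
    · exact N.z_mem_image_add_one j
    · rw [heq]; exact N.z_mem_image_add_one (j + 1)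
  have hz : ∀ k, N.z k = N.z j := fun k => (N.eq_z_of_mem_image (hq k) (hq (k + 1))).symm
  have hfix : ∀ k, N.f k (N.z j) = N.z j := by
    intro k
    obtain ⟨a, b, hab, ⟨y, hya, hyk⟩, ⟨y', hyb, hyk'⟩⟩ := hstable.exists_ne k
    rw [bdry_eq, hz (k - 1), hz k, pair_eq_singleton, mem_singleton_iff] at hyk hyk'
    rw [hyk, copy_cons, copy_singleton] at hya
    rw [hyk', copy_cons, copy_singleton] at hyb
    obtain ⟨p, hpa, hp⟩ := hya
    obtain ⟨p', hpb, hp'⟩ := hyb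
    obtain rfl : p = p' := (N.f k).injective (hp.trans hp'.symm)
    have hpz : p = N.z j := by
      rcases Fin.eq_add_one_or_eq_add_one_of_ne h3 hab with rfl | rfl
      · exact (N.eq_z_of_mem_image hpa hpb).trans (hz a)
      · exact (N.eq_z_of_mem_image hpb hpa).trans (hz b)
    rwa [hpz] at hp
  induction σ with
  | nil => exact N.copy_nil ▸ N.image_subset_F j (hq j)
  | cons i σ ih => rw [copy_cons]; exact ⟨_, ih, hfix i⟩

lemma z_ne_z_add_one (hstable : N.Stable) {j : Fin N.n} (hram : ∃ C, ∀ m, N.cnt m (N.z j) ≤ C) :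
    N.z j ≠ N.z (j + 1) := by
  intro heq
  obtain h4 | h3 : 4 ≤ N.n ∨ N.n = 3 := by have := N.hn; omega
  · have h₁ : j ≠ j + 1 + 1 := fun h =>
      N.one_add_one_ne_zero (by rwa [add_assoc, left_eq_add] at h)
    have h₂ : j ≠ j + 1 + 1 + 1 := fun h => N.one_add_one_add_one_ne_zero h4
      (by rwa [add_assoc, add_assoc, left_eq_add, ← add_assoc] at h)
    have h₃ : j + 1 + 1 ≠ j + 1 := fun h => N.one_ne_zero (add_eq_left.1 h)
    have := N.image_inter_image_eq_empty h₁ h₂ h₃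
    exact this.subset ⟨N.z_mem_image j, heq ▸ N.z_mem_image_add_one (j + 1)⟩
  · obtain ⟨C, hC⟩ := hram
    have := N.cnt_eq_pow_of_forall_mem_copy (N.mem_copy_of_z_eq_of_three hstable h3 heq) C ▸ hC C
    exact (Nat.lt_pow_self (by omega : 1 < N.n)).not_ge this

section Survivors

variable {N}

lemma exists_forall_mem_copy_append_eq_or_eq_add_one (hz : ∀ j, N.z j ≠ N.z (j + 1))
    (x : Euc d) (κ : List (Fin N.n)) : ∃ i, ∀ j, x ∈ N.copy (κ ++ [j]) → j = i ∨ j = i + 1 := by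
  by_cases h : ∃ i, x ∈ N.copy (κ ++ [i])
  swap
  · exact ⟨0, fun j hj => absurd ⟨j, hj⟩ h⟩
  obtain ⟨i, hi⟩ := h
  by_cases hprev : x ∈ N.copy (κ ++ [i - 1])
  · refine ⟨i - 1, fun j hj => ?_⟩
    rcases eq_or_ne j i with rfl | hji
    · exact .inr (sub_add_cancel j 1).symm
    rcases N.eq_add_one_or_eq_add_one_of_mem hji.symm hi hj with rfl | h
    · -- `x` would be both nodes `f_κ(z (i - 1))` and `f_κ(z i)`
      have h₁ := N.eq_word_z_of_mem hprev (by rwa [sub_add_cancel])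
      have h₂ := N.eq_word_z_of_mem hi hj
      refine absurd ?_ (hz (i - 1))
      rw [sub_add_cancel]
      exact (N.word κ).injective (h₁.symm.trans h₂)
    · exact .inl (eq_sub_of_add_eq h.symm)
  · refine ⟨i, fun j hj => ?_⟩
    rcases eq_or_ne j i with rfl | hji
    · exact .inl rfl
    rcases N.eq_add_one_or_eq_add_one_of_mem hji.symm hi hj with rfl | h
    · exact .inr rfl
    · exact absurd (eq_sub_of_add_eq h.symm ▸ hj) hprev

variable (N) in
def survivors (x : Euc d) (κ : List (Fin N.n)) : Set (Euc d) :=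
  ⋃ j ∈ {j | x ∉ N.copy (κ ++ [j])}, N.copy (κ ++ [j])

lemma mem_survivors {x y : Euc d} {κ : List (Fin N.n)} {j : Fin N.n}
    (hy : y ∈ N.copy (κ ++ [j])) (hx : x ∉ N.copy (κ ++ [j])) : y ∈ N.survivors x κ :=
  mem_biUnion hx hy

lemma survivors_subset (x : Euc d) (κ : List (Fin N.n)) : N.survivors x κ ⊆ N.F \ {x} :=
  iUnion₂_subset fun _ hj _ hy => ⟨N.copy_subset_F _ hy, fun h => hj (h ▸ hy)⟩

lemma isPreconnected_survivors (hz : ∀ j, N.z j ≠ N.z (j + 1)) (x : Euc d)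
    (κ : List (Fin N.n)) : IsPreconnected (N.survivors x κ) := by
  obtain ⟨i, hi⟩ := exists_forall_mem_copy_append_eq_or_eq_add_one hz x κ
  refine IsPreconnected.biUnion_of_reflTransGen (fun j _ => (N.isConnected_copy _).isPreconnected)
    fun a ha b hb => ReflTransGen.mono (fun j k ⟨hj, hk, hjk⟩ => ⟨?_, hj⟩) _ _
      (Fin.reflTransGen_compl_of_subset_pair (B := {j | x ∈ N.copy (κ ++ [j])}) hi ha hb)
  rcases hjk with rfl | rfl
  · exact ⟨_, N.word_z_mem_copy_append κ j, N.word_z_mem_copy_append_add_one κ j⟩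
  · exact ⟨_, N.word_z_mem_copy_append_add_one κ k, N.word_z_mem_copy_append κ k⟩

lemma survivors_nonempty (hz : ∀ j, N.z j ≠ N.z (j + 1)) (x : Euc d) (κ : List (Fin N.n)) :
    (N.survivors x κ).Nonempty := by
  obtain ⟨i, hi⟩ := exists_forall_mem_copy_append_eq_or_eq_add_one hz x κ
  obtain ⟨y, hy⟩ := N.Fne.image (N.word (κ ++ [i + 1 + 1]))
  refine ⟨y, mem_survivors hy fun hx => ?_⟩
  rcases hi _ hx with h | h
  · exact N.one_add_one_ne_zero (by rwa [add_assoc, add_eq_left] at h)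
  · exact N.one_ne_zero (add_eq_left.1 h)

lemma exists_mem_survivors {x y : Euc d} {κ : List (Fin N.n)} (hx : x ∈ N.copy κ)
    (hy : y ∈ N.copy κ) (hyx : y ≠ x) : ∃ τ, κ <+: τ ∧ x ∈ N.copy τ ∧ y ∈ N.survivors x τ := by
  obtain ⟨m, hm⟩ := N.exists_forall_length_dist_lt (dist_pos.2 hyx)
  obtain ⟨τ, j, hκτ, -, hxτ, hyj, hxj⟩ := List.exists_prefix_crossing
    (P := (y ∈ N.copy ·)) (Q := (x ∉ N.copy ·)) (fun τ h => N.exists_mem_copy_append h)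
    ⟨m, fun τ hyτ hτ hxτ => (hm τ hτ y hyτ x hxτ).false⟩ hy (not_not.2 hx)
  exact ⟨τ, hκτ, not_not.1 hxτ, mem_survivors hyj hxj⟩

lemma mem_survivors_of_mem_bdry {x y : Euc d} {κ : List (Fin N.n)} {i : Fin N.n}
    (hx : x ∈ N.copy (κ ++ [i])) (hy : y ∈ N.bdry i) (hyx : N.word κ y ≠ x) :
    N.word κ y ∈ N.survivors x κ := by
  rw [bdry_eq, mem_insert_iff, mem_singleton_iff] at hy
  rcases hy with rfl | rfl
  · refine mem_survivors (N.word_z_mem_copy_append κ (i - 1)) fun hx' => hyx ?_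
    exact (N.eq_word_z_of_mem hx' (by rwa [sub_add_cancel])).symm
  · exact mem_survivors (N.word_z_mem_copy_append_add_one κ i) fun hx' =>
      hyx (N.eq_word_z_of_mem hx hx').symm

lemma survivors_inter_nonempty (hstable : N.Stable) {x : Euc d} {κ : List (Fin N.n)}
    {i : Fin N.n} (hx : x ∈ N.copy (κ ++ [i])) (hns : ¬ N.IsSplit x (κ ++ [i])) :
    (N.survivors x κ ∩ N.survivors x (κ ++ [i])).Nonempty := by
  obtain ⟨a, b, hab, hA, hB⟩ := hstable.exists_ne i
  obtain ⟨c, hc, y, hyc, hy⟩ : ∃ c, x ∉ N.copy (κ ++ [i] ++ [c]) ∧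
      (N.copy [i, c] ∩ N.bdry i).Nonempty := by
    by_cases ha : x ∈ N.copy (κ ++ [i] ++ [a])
    · exact ⟨b, fun hb => hns ⟨a, b, hab, ha, hb⟩, hB⟩
    · exact ⟨a, ha, hA⟩
  have hmem : N.word κ y ∈ N.copy (κ ++ [i] ++ [c]) := by
    rw [List.append_assoc, copy_append]
    exact mem_image_of_mem _ hyc
  exact ⟨_, mem_survivors_of_mem_bdry hx hy fun h => hc (h ▸ hmem), mem_survivors hmem hc⟩

lemma exists_mem_copy_mem_survivors (hz : ∀ j, N.z j ≠ N.z (j + 1)) {x : Euc d}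
    {κ : List (Fin N.n)} {i : Fin N.n} (hx : x ∈ N.copy (κ ++ [i])) :
    ∃ b ∈ N.copy (κ ++ [i]), b ≠ x ∧ b ∈ N.survivors x κ := by
  have hbdry : ∀ y ∈ N.bdry i, N.word κ y ∈ N.copy (κ ++ [i]) := by
    rw [bdry_eq]
    rintro y (rfl | rfl)
    · simpa using N.word_z_mem_copy_append_add_one κ (i - 1)
    · exact N.word_z_mem_copy_append κ i
  obtain ⟨y, hy, hyx⟩ : ∃ y ∈ N.bdry i, N.word κ y ≠ x := by
    by_contra! h
    rw [bdry_eq] at h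
    have := (N.word κ).injective ((h _ (mem_insert _ _)).trans (h _ (mem_insert_of_mem _ rfl)).symm)
    exact hz (i - 1) (by rwa [sub_add_cancel])
  exact ⟨_, hbdry y hy, hyx, mem_survivors_of_mem_bdry hx hy hyx⟩

variable (N) in
def Linked (x : Euc d) : List (Fin N.n) → List (Fin N.n) → Prop :=
  ReflTransGen fun κ τ => (N.survivors x κ ∩ N.survivors x τ).Nonempty

lemma Linked.symm {x : Euc d} {κ τ : List (Fin N.n)} (h : N.Linked x κ τ) : N.Linked x τ κ := by
  induction h with
  | refl => exact .refl
  | tail _ hstep ih => exact .head (by rwa [inter_comm]) ih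

lemma linked_of_prefix {x : Euc d} {κ : List (Fin N.n)}
    (h : ∀ μ j, κ <+: μ → x ∈ N.copy (μ ++ [j]) → N.Linked x μ (μ ++ [j]))
    {τ : List (Fin N.n)} (hκτ : κ <+: τ) (hx : x ∈ N.copy τ) : N.Linked x κ τ := by
  induction τ using List.reverseRecOn with
  | nil => rw [List.prefix_nil.1 hκτ]; exact .refl
  | append_singleton μ j ih =>
    rcases List.prefix_concat_iff.1 hκτ with rfl | hκμ
    · exact .refl
    · exact (ih hκμ (N.copy_subset_of_prefix (List.prefix_append μ [j]) hx)).trans (h μ j hκμ hx)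

lemma linked_append_singleton (hstable : N.Stable) (hz : ∀ j, N.z j ≠ N.z (j + 1)) {x : Euc d}
    {L : ℕ} (hL : ∀ κ, N.IsSplit x κ → κ.length < L) (κ : List (Fin N.n)) (i : Fin N.n)
    (hx : x ∈ N.copy (κ ++ [i])) : N.Linked x κ (κ ++ [i]) := by
  suffices ∀ t κ i, L - κ.length = t → x ∈ N.copy (κ ++ [i]) → N.Linked x κ (κ ++ [i]) from
    this _ κ i rfl hx
  intro t
  induction t using Nat.strong_induction_on with
  | _ t ih =>
    intro κ i ht hx
    by_cases hsplit : N.IsSplit x (κ ++ [i])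
    · -- a boundary node `b ≠ x` of `F_{κ i}` survives in `F_κ`; follow `b` down into a copy
      -- `F_τ ∋ x` where it survives, and come back up to `F_{κ i}` by induction
      obtain ⟨b, hb, hbx, hbκ⟩ := exists_mem_copy_mem_survivors hz hx
      obtain ⟨τ, hτ, hxτ, hbτ⟩ := exists_mem_survivors hx hb hbx
      have hlen := hL _ hsplit
      refine .head ⟨b, hbκ, hbτ⟩ (Linked.symm (linked_of_prefix (fun μ j hμ hxμ => ?_) hτ hxτ))
      have := hμ.length_le
      rw [List.length_append, List.length_singleton] at this hlen
      exact ih _ (by omega) μ j rfl hxμ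
    · exact .single (survivors_inter_nonempty hstable hx hsplit)

end Survivors

theorem noCutPoints_of_stable_of_cnt_le (hstable : N.Stable)
    (hram : ∀ x, ∃ C, ∀ m, N.cnt m x ≤ C) : N.NoCutPoints := by
  have hz : ∀ j, N.z j ≠ N.z (j + 1) := fun j => N.z_ne_z_add_one hstable (hram _)
  intro x hx
  obtain ⟨C, hC⟩ := hram x
  obtain ⟨L, hL⟩ := N.exists_length_lt_of_isSplit hC
  obtain ⟨p, hp⟩ := survivors_nonempty hz x []
  have hsub : ∀ τ, N.Linked x [] τ → N.survivors x τ ⊆ connectedComponentIn (N.F \ {x}) p := by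
    intro τ h
    induction h with
    | refl =>
      exact (isPreconnected_survivors hz x []).subset_connectedComponentIn hp
        (survivors_subset x [])
    | tail _ hmeet ih =>
      obtain ⟨q, hq, hq'⟩ := hmeet
      rw [connectedComponentIn_eq (ih hq)]
      exact (isPreconnected_survivors hz x _).subset_connectedComponentIn hq' (survivors_subset x _)
  have hF : N.F \ {x} ⊆ connectedComponentIn (N.F \ {x}) p := by
    intro y hy
    obtain ⟨τ, -, hxτ, hyτ⟩ := exists_mem_survivors (N.copy_nil ▸ hx) (N.copy_nil ▸ hy.1) hy.2
    exact hsub τ (linked_of_prefix (fun μ j _ => linked_append_singleton hstable hz hL μ j)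
      List.nil_prefix hxτ) hyτ
  rw [hF.antisymm (connectedComponentIn_subset _ _)]
  exact isConnected_connectedComponentIn_iff.2 (survivors_subset x [] hp)

end Necklace

/-- Every stable self-similar necklace in `ℝ^d` satisfying the open set condition has no
cut points. -/
theorem Necklace.noCutPoints_of_stable_selfSimilar_osc {d : ℕ} (N : Necklace d)
    (hstable : N.Stable) (hss : N.SelfSimilar) (hosc : N.OSC) : N.NoCutPoints := by
  obtain ⟨K, hK⟩ := N.exists_forall_cnt_le_of_selfSimilar_of_osc hss hosc
  exact N.noCutPoints_of_stable_of_cnt_le hstable fun x => ⟨K, hK x⟩
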